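/- arXiv:1609.02964 — 3 statements merged into one kernel-verified Lean document; each statement's English description precedes it below -/
import Mathlib

section
/- Sup-norm interpolation inequality (inequality (5.8), used from Lee's work): For every q ≥ 1 there is a constant C_q such that for all real numbers a < b, every continuously differentiable function g : [a,b] → ℂ, and every μ > 0, one has sup_{t ∈ [a,b]} |g(t)| ≤ C_q ( |g(a)| + μ^{1/q − 1} ‖g'‖_{L^q([a,b])} + μ^{1/q} ‖g‖_{L^q([a,b])} ). -/
/-!
If `b - a ≤ μ⁻¹`, compare `g t` with `g a` by the fundamental theorem of calculus and bound
`∫ ‖g'‖` over `[a, b]` by Hölder's inequality: the length factor `(b - a) ^ (1 - 1/q)` is at most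
`μ ^ (1/q - 1)`. Otherwise pick a subinterval `J ∋ t` of length `μ⁻¹`; comparing `g t` with a point
`s ∈ J` where `‖g‖` is minimal gives `‖g s‖ ^ q ≤ μ ∫_J ‖g‖ ^ q`, and `∫_J ‖g'‖` is bounded by
Hölder as before. So one can take `C_q = 1`.
-/

open MeasureTheory intervalIntegral Set

theorem integral_le_measureReal_univ_rpow_mul_integral_rpow {α : Type*} [MeasurableSpace α]
    {μ : Measure α} [IsFiniteMeasure μ] {q : ℝ} (hq : 1 ≤ q) {f : α → ℝ}
    (hf_nonneg : 0 ≤ᵐ[μ] f) (hf : MemLp f (ENNReal.ofReal q) μ) :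
    ∫ x, f x ∂μ ≤ μ.real univ ^ (1 - 1 / q) * (∫ x, f x ^ q ∂μ) ^ (1 / q) := by
  rcases hq.eq_or_lt with rfl | hq
  · simp
  have hpq : q.HolderConjugate q.conjExponent := .conjExponent hq
  have key := integral_mul_le_Lp_mul_Lq_of_nonneg hpq hf_nonneg
    (Filter.Eventually.of_forall fun _ => zero_le_one) hf (memLp_const (1 : ℝ))
  rw [one_div, hpq.one_sub_inv, ← one_div, mul_comm]
  simpa using key

theorem intervalIntegral_norm_le_rpow_mul_intervalIntegral_rpow_norm {E : Type*}
    [NormedAddCommGroup E] {q c d : ℝ} (hq : 1 ≤ q) (hcd : c ≤ d) {f : ℝ → E}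
    (hf : ContinuousOn f (Icc c d)) :
    ∫ s in c..d, ‖f s‖ ≤ (d - c) ^ (1 - 1 / q) * (∫ s in c..d, ‖f s‖ ^ q) ^ (1 / q) := by
  obtain ⟨M, hM⟩ := isCompact_Icc.exists_bound_of_continuousOn hf
  have hmem : MemLp (fun s => ‖f s‖) (ENNReal.ofReal q) (volume.restrict (Ioc c d)) :=
    .of_bound (hf.norm.aestronglyMeasurable measurableSet_Icc |>.mono_set Ioc_subset_Icc_self) M
      (by filter_upwards [ae_restrict_mem measurableSet_Ioc] with x hx
          simpa using hM x (Ioc_subset_Icc_self hx))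
  have := integral_le_measureReal_univ_rpow_mul_integral_rpow hq
    (Filter.Eventually.of_forall fun _ => norm_nonneg _) hmem
  rwa [measureReal_restrict_apply_univ, Real.volume_real_Ioc_of_le hcd, ← integral_of_le hcd,
    ← integral_of_le hcd] at this

section

variable {E : Type*} [NormedAddCommGroup E] {f : ℝ → E} {a b c d q : ℝ}

theorem intervalIntegral_rpow_norm_mono_interval (hq : 0 ≤ q) (hac : a ≤ c) (hcd : c ≤ d)
    (hdb : d ≤ b) (hf : ContinuousOn f (Icc a b)) :
    ∫ s in c..d, ‖f s‖ ^ q ≤ ∫ s in a..b, ‖f s‖ ^ q :=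
  integral_mono_interval hac hcd hdb (.of_forall fun _ => by positivity)
    ((hf.norm.rpow_const fun _ _ => .inr hq).intervalIntegrable_of_Icc (hac.trans (hcd.trans hdb)))

theorem intervalIntegral_norm_le_rpow_mul_integral_rpow_norm_of_subinterval (hq : 1 ≤ q)
    (hac : a ≤ c) (hcd : c ≤ d) (hdb : d ≤ b) (hf : ContinuousOn f (Icc a b)) :
    ∫ s in c..d, ‖f s‖ ≤ (d - c) ^ (1 - 1 / q) * (∫ s in a..b, ‖f s‖ ^ q) ^ (1 / q) := by
  refine (intervalIntegral_norm_le_rpow_mul_intervalIntegral_rpow_norm hq hcd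
    (hf.mono (Icc_subset_Icc hac hdb))).trans ?_
  gcongr
  · exact integral_nonneg hcd fun _ _ => by positivity
  · exact intervalIntegral_rpow_norm_mono_interval (by linarith) hac hcd hdb hf

theorem exists_mem_Icc_rpow_norm_mul_le_intervalIntegral (hq : 0 ≤ q) (hcd : c ≤ d)
    (hf : ContinuousOn f (Icc c d)) :
    ∃ s ∈ Icc c d, ‖f s‖ ^ q * (d - c) ≤ ∫ u in c..d, ‖f u‖ ^ q := by
  obtain ⟨s, hs, hmin⟩ := isCompact_Icc.exists_isMinOn (nonempty_Icc.2 hcd) hf.norm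
  refine ⟨s, hs, ?_⟩
  calc ‖f s‖ ^ q * (d - c) = ∫ _ in c..d, ‖f s‖ ^ q := by simp [mul_comm]
    _ ≤ ∫ u in c..d, ‖f u‖ ^ q :=
      integral_mono_on hcd intervalIntegrable_const
        ((hf.norm.rpow_const fun _ _ => .inr hq).intervalIntegrable_of_Icc hcd)
        fun u hu => by gcongr; exact hmin hu

end

theorem exists_Icc_subset_Icc_mem {a b L t : ℝ} (hL : 0 ≤ L) (hLb : L ≤ b - a)
    (ht : t ∈ Icc a b) : ∃ c, a ≤ c ∧ c + L ≤ b ∧ t ∈ Icc c (c + L) := by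
  refine ⟨min t (b - L), le_min ht.1 (by linarith), by linarith [min_le_right t (b - L)],
    min_le_left _ _, ?_⟩
  rcases le_total t (b - L) with h | h
  · rw [min_eq_left h]; linarith
  · rw [min_eq_right h]; linarith [ht.2]

section

variable {g : ℝ → ℂ} {a b q μ t : ℝ}

theorem norm_sub_le_intervalIntegral_norm_derivWithin (hab : a < b)
    (hg : ContDiffOn ℝ 1 g (Icc a b)) {x y : ℝ} (hax : a ≤ x) (hxy : x ≤ y) (hyb : y ≤ b) :
    ‖g y - g x‖ ≤ ∫ u in x..y, ‖derivWithin g (Icc a b) u‖ := by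
  have hsub : Icc x y ⊆ Icc a b := Icc_subset_Icc hax hyb
  have hg' : ContinuousOn (derivWithin g (Icc a b)) (Icc a b) :=
    hg.continuousOn_derivWithin (uniqueDiffOn_Icc hab) le_rfl
  have hftc : ∫ u in x..y, derivWithin g (Icc a b) u = g y - g x := by
    refine integral_eq_sub_of_hasDeriv_right_of_le hxy (hg.continuousOn.mono hsub)
      (fun z hz => ?_) ((hg'.mono hsub).intervalIntegrable_of_Icc hxy)
    have hz' : z ∈ Ioo a b := ⟨hax.trans_lt hz.1, hz.2.trans_le hyb⟩
    exact ((hg.differentiableOn one_ne_zero z (Ioo_subset_Icc_self hz')).hasDerivWithinAt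
      |>.hasDerivAt (Icc_mem_nhds hz'.1 hz'.2)).hasDerivWithinAt
  rw [← hftc]
  exact norm_integral_le_integral_norm hxy

theorem norm_le_norm_add_intervalIntegral_norm_derivWithin (hab : a < b)
    (hg : ContDiffOn ℝ 1 g (Icc a b)) {c d s : ℝ} (hac : a ≤ c) (hdb : d ≤ b)
    (hs : s ∈ Icc c d) (ht : t ∈ Icc c d) :
    ‖g t‖ ≤ ‖g s‖ + ∫ u in c..d, ‖derivWithin g (Icc a b) u‖ := by
  have hosc : ∀ x ∈ Icc c d, ∀ y ∈ Icc c d, x ≤ y →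
      ‖g y - g x‖ ≤ ∫ u in c..d, ‖derivWithin g (Icc a b) u‖ := fun x hx y hy hxy =>
    (norm_sub_le_intervalIntegral_norm_derivWithin hab hg (hac.trans hx.1) hxy
      (hy.2.trans hdb)).trans <| integral_mono_interval hx.1 hxy hy.2
        (.of_forall fun _ => norm_nonneg _)
        ((hg.continuousOn_derivWithin (uniqueDiffOn_Icc hab) le_rfl).norm.mono
          (Icc_subset_Icc hac hdb) |>.intervalIntegrable_of_Icc (hs.1.trans hs.2))
  have hts : ‖g t - g s‖ ≤ ∫ u in c..d, ‖derivWithin g (Icc a b) u‖ := by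
    rcases le_total s t with hst | hts
    · exact hosc s hs t ht hst
    · exact norm_sub_rev (g t) (g s) ▸ hosc t ht s hs hts
  calc ‖g t‖ ≤ ‖g s‖ + ‖g t - g s‖ := norm_le_insert' _ _
    _ ≤ _ := by gcongr

theorem norm_le_norm_left_add_of_sub_le_inv (hq : 1 ≤ q) (hab : a < b)
    (hg : ContDiffOn ℝ 1 g (Icc a b)) (hμ : 0 < μ) (hμb : b - a ≤ μ⁻¹) (ht : t ∈ Icc a b) :
    ‖g t‖ ≤ ‖g a‖
      + μ ^ (1 / q - 1) * (∫ s in a..b, ‖derivWithin g (Icc a b) s‖ ^ q) ^ (1 / q) := by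
  have hq' : 0 ≤ 1 - 1 / q := sub_nonneg.2 (div_le_one_of_le₀ hq (by linarith))
  calc ‖g t‖ ≤ ‖g a‖ + ∫ s in a..b, ‖derivWithin g (Icc a b) s‖ :=
        norm_le_norm_add_intervalIntegral_norm_derivWithin hab hg le_rfl le_rfl
          (left_mem_Icc.2 hab.le) ht
    _ ≤ ‖g a‖ + (b - a) ^ (1 - 1 / q)
          * (∫ s in a..b, ‖derivWithin g (Icc a b) s‖ ^ q) ^ (1 / q) := by
        gcongr
        exact intervalIntegral_norm_le_rpow_mul_integral_rpow_norm_of_subinterval hq le_rfl hab.le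
          le_rfl (hg.continuousOn_derivWithin (uniqueDiffOn_Icc hab) le_rfl)
    _ ≤ ‖g a‖ + μ⁻¹ ^ (1 - 1 / q)
          * (∫ s in a..b, ‖derivWithin g (Icc a b) s‖ ^ q) ^ (1 / q) := by
        gcongr
        exact Real.rpow_nonneg (integral_nonneg hab.le fun _ _ => by positivity) _
    _ = _ := by rw [Real.inv_rpow hμ.le, ← Real.rpow_neg hμ.le, neg_sub]

theorem norm_le_add_of_inv_le_sub (hq : 1 ≤ q) (hab : a < b) (hg : ContDiffOn ℝ 1 g (Icc a b))
    (hμ : 0 < μ) (hμb : μ⁻¹ ≤ b - a) (ht : t ∈ Icc a b) :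
    ‖g t‖ ≤ μ ^ (1 / q - 1) * (∫ s in a..b, ‖derivWithin g (Icc a b) s‖ ^ q) ^ (1 / q)
      + μ ^ (1 / q) * (∫ s in a..b, ‖g s‖ ^ q) ^ (1 / q) := by
  have hq0 : 0 < q := by linarith
  obtain ⟨c, hac, hdb, htc⟩ := exists_Icc_subset_Icc_mem (inv_nonneg.2 hμ.le) hμb ht
  have hcd : c ≤ c + μ⁻¹ := le_add_of_nonneg_right (inv_nonneg.2 hμ.le)
  obtain ⟨s, hs, hgs⟩ := exists_mem_Icc_rpow_norm_mul_le_intervalIntegral hq0.le hcd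
    (hg.continuousOn.mono (Icc_subset_Icc hac hdb))
  have hgs_le : ‖g s‖ ^ q ≤ μ * ∫ u in a..b, ‖g u‖ ^ q := by
    have hJ := hgs.trans
      (intervalIntegral_rpow_norm_mono_interval hq0.le hac hcd hdb hg.continuousOn)
    rwa [add_sub_cancel_left, ← div_eq_mul_inv, div_le_iff₀ hμ, mul_comm] at hJ
  have hgs_le' : ‖g s‖ ≤ μ ^ (1 / q) * (∫ u in a..b, ‖g u‖ ^ q) ^ (1 / q) := calc
    ‖g s‖ = (‖g s‖ ^ q) ^ (1 / q) := by rw [one_div, Real.rpow_rpow_inv (norm_nonneg _) hq0.ne']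
    _ ≤ (μ * ∫ u in a..b, ‖g u‖ ^ q) ^ (1 / q) := by gcongr
    _ = _ := Real.mul_rpow hμ.le (integral_nonneg hab.le fun _ _ => by positivity)
  have hD := intervalIntegral_norm_le_rpow_mul_integral_rpow_norm_of_subinterval hq hac hcd hdb
    (hg.continuousOn_derivWithin (uniqueDiffOn_Icc hab) le_rfl)
  rw [add_sub_cancel_left, Real.inv_rpow hμ.le, ← Real.rpow_neg hμ.le, neg_sub] at hD
  linarith [norm_le_norm_add_intervalIntegral_norm_derivWithin hab hg hac hdb hs htc]

end

/-- Sup-norm interpolation inequality (inequality (5.8) of the paper, from Lee's work):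
for every `q ≥ 1` there is a constant `C_q` such that for all `a < b`, every continuously
differentiable `g : [a,b] → ℂ` and every `μ > 0`,
`sup_{t∈[a,b]} |g(t)| ≤ C_q (|g(a)| + μ^{1/q-1} ‖g'‖_{L^q[a,b]} + μ^{1/q} ‖g‖_{L^q[a,b]})`. -/
theorem sup_norm_interpolation (q : ℝ) (hq : 1 ≤ q) :
    ∃ C : ℝ, 0 < C ∧ ∀ a b : ℝ, a < b → ∀ g : ℝ → ℂ,
      ContDiffOn ℝ 1 g (Set.Icc a b) → ∀ μ : ℝ, 0 < μ → ∀ t ∈ Set.Icc a b,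
        ‖g t‖ ≤ C * (‖g a‖
          + μ ^ (1 / q - 1) * (∫ s in a..b, ‖derivWithin g (Set.Icc a b) s‖ ^ q) ^ (1 / q)
          + μ ^ (1 / q) * (∫ s in a..b, ‖g s‖ ^ q) ^ (1 / q)) := by
  refine ⟨1, one_pos, fun a b hab g hg μ hμ t ht => ?_⟩
  rcases le_total (b - a) μ⁻¹ with hμb | hμb
  · have hL : 0 ≤ μ ^ (1 / q) * (∫ s in a..b, ‖g s‖ ^ q) ^ (1 / q) :=
      mul_nonneg (Real.rpow_nonneg hμ.le _)
        (Real.rpow_nonneg (integral_nonneg hab.le fun _ _ => by positivity) _)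
    linarith [norm_le_norm_left_add_of_sub_le_inv hq hab hg hμ hμb ht]
  · linarith [norm_le_add_of_inv_le_sub hq hab hg hμ hμb ht, norm_nonneg (g a)]
end

section
/- From frequency-localized Strichartz estimates to maximal estimates (Lemma 5.2, torus version): Let n ≥ 1 and q ≥ 2. There is a constant C = C(n,q) with the following property. Let N ≥ 1 and A > 0, and suppose that for every finitely supported c' : ℤⁿ → ℂ with c'_k = 0 unless N ≤ |k| < 2N, the evolution u'(t,x) = Σ_k e^{it|k|²} c'_k e^{ik·x} satisfies ‖u'‖_{L^q((0,1] × [0,2π]ⁿ, dt dx)} ≤ A (Σ_k |c'_k|²)^{1/2}. Then for every finitely supported c : ℤⁿ → ℂ with c_k = 0 unless N ≤ |k| < 2N, with f(x) = Σ_k c_k e^{ik·x} and u(t,x) = Σ_k e^{it|k|²} c_k e^{ik·x}, one has ‖ sup_{0<t≤1} |u(t,x)| ‖_{L^q([0,2π]ⁿ, dx)} ≤ C ( N^{2/q} A (Σ_k |c_k|²)^{1/2} + ‖f‖_{L^q([0,2π]ⁿ)} ). -/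
open MeasureTheory Finset

/-- The free Schrödinger evolution `u(t,x) = ∑ₖ e^{it|k|²} cₖ e^{ik·x}` on `ℝⁿ` of the
trigonometric polynomial with finitely supported Fourier coefficients `c : ℤⁿ → ℂ`. -/
noncomputable def torusEvol (n : ℕ) (c : (Fin n → ℤ) →₀ ℂ) (t : ℝ) (x : Fin n → ℝ) : ℂ :=
  ∑ k ∈ c.support,
    Complex.exp (Complex.I * (t : ℂ) * (∑ i, (k i : ℂ) ^ 2)) * c k *
      Complex.exp (Complex.I * (∑ i, (k i : ℂ) * (x i : ℂ)))

/-- The maximal function `sup_{0 < t ≤ 1} |u(t,x)|`. -/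
noncomputable def torusMax (n : ℕ) (c : (Fin n → ℤ) →₀ ℂ) (x : Fin n → ℝ) : ℝ :=
  ⨆ t ∈ Set.Ioc (0 : ℝ) 1, ‖torusEvol n c t x‖

/-- The fundamental cube `[0,2π]ⁿ`. -/
def torusCube (n : ℕ) : Set (Fin n → ℝ) := Set.univ.pi fun _ => Set.Icc 0 (2 * Real.pi)

/-- The Euclidean length `|k| = (k₁² + ⋯ + kₙ²)^{1/2}` of a frequency `k ∈ ℤⁿ`. -/
noncomputable def freqNorm (n : ℕ) (k : Fin n → ℤ) : ℝ := Real.sqrt (∑ i, (k i : ℝ) ^ 2)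

/-!
For fixed `x`, the fundamental theorem of calculus in `t` gives
`|u(t,x)|^q ≤ |f(x)|^q + q ∫₀¹ |u|^{q-1} |∂ₜu| ds` for every `t ∈ [0,1]`, hence the same bound for
the maximal function. The time derivative `∂ₜu` is again an evolution, with coefficients
`i|k|² cₖ` supported in the same annulus and of `ℓ²` size at most `4N² ‖c‖`. Integrating in `x`
and splitting `q |u|^{q-1} |∂ₜu| ≤ (q-1) λ |u|^q + λ^{1-q} |∂ₜu|^q` with `λ = 4N²` (Young), the
Strichartz bound applied to `u` and to `∂ₜu` yields
`∫ sup_t |u|^q ≤ ‖f‖_q^q + 4q N² (A ‖c‖)^q`; taking `q`-th roots gives the claim with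
`C = (4q)^{1/q}`.
-/

theorem norm_rpow_sub_two_mul_inner_le {E : Type*} [NormedAddCommGroup E]
    [InnerProductSpace ℝ E] (q : ℝ) (x y : E) :
    ‖x‖ ^ (q - 2) * inner ℝ x y ≤ ‖x‖ ^ (q - 1) * ‖y‖ := by
  rcases eq_or_ne x 0 with rfl | hx
  · simp only [inner_zero_left, mul_zero]; positivity
  calc ‖x‖ ^ (q - 2) * inner ℝ x y ≤ ‖x‖ ^ (q - 2) * (‖x‖ * ‖y‖) := by
        gcongr; exact real_inner_le_norm x y
    _ = ‖x‖ ^ (q - 1) * ‖y‖ := by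
        rw [show q - 1 = q - 2 + 1 by ring, Real.rpow_add_one (norm_ne_zero_iff.2 hx)]; ring

theorem norm_rpow_le_add_integral {E : Type*} [NormedAddCommGroup E] [InnerProductSpace ℝ E]
    {u D : ℝ → E} (hu : ∀ s, HasDerivAt u (D s) s) (hD : Continuous D) {q : ℝ} (hq : 1 < q)
    {a b t : ℝ} (hat : a ≤ t) (htb : t ≤ b) :
    ‖u t‖ ^ q ≤ ‖u a‖ ^ q + ∫ s in a..b, q * ‖u s‖ ^ (q - 1) * ‖D s‖ := by
  have hcont : Continuous u := continuous_iff_continuousAt.2 fun s => (hu s).continuousAt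
  have hbound : Continuous fun s => q * ‖u s‖ ^ (q - 1) * ‖D s‖ := by
    fun_prop (disch := linarith)
  have hnonneg : ∀ s, 0 ≤ q * ‖u s‖ ^ (q - 1) * ‖D s‖ := fun s => by positivity
  have hderiv : ∀ s, HasDerivAt (fun s => ‖u s‖ ^ q)
      (q * ‖u s‖ ^ (q - 2) * inner ℝ (u s) (D s)) s := fun s => by
    have h := (hasFDerivAt_norm_rpow (u s) hq).comp_hasDerivAt s (hu s)
    rw [smul_apply, innerSL_apply_apply, smul_eq_mul] at h
    exact h
  have hftc : ‖u t‖ ^ q - ‖u a‖ ^ q ≤ ∫ s in a..t, q * ‖u s‖ ^ (q - 1) * ‖D s‖ :=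
    intervalIntegral.sub_le_integral_of_hasDeriv_right_of_le hat
      (by fun_prop (disch := linarith) : Continuous fun s => ‖u s‖ ^ q).continuousOn
      (fun s _ => (hderiv s).hasDerivWithinAt) (hbound.integrableOn_Icc)
      (fun s _ => by simpa only [mul_assoc] using
        mul_le_mul_of_nonneg_left (norm_rpow_sub_two_mul_inner_le q (u s) (D s)) (by linarith))
  have hmono : ∫ s in a..t, q * ‖u s‖ ^ (q - 1) * ‖D s‖
      ≤ ∫ s in a..b, q * ‖u s‖ ^ (q - 1) * ‖D s‖ :=
    intervalIntegral.integral_mono_interval le_rfl hat htb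
      (Filter.Eventually.of_forall hnonneg) (hbound.intervalIntegrable _ _)
  linarith

theorem mul_rpow_sub_one_mul_le {q l x y : ℝ} (hq : 1 < q) (hl : 0 < l) (hx : 0 ≤ x)
    (hy : 0 ≤ y) : q * x ^ (q - 1) * y ≤ (q - 1) * l * x ^ q + l ^ (1 - q) * y ^ q := by
  have hq0 : 0 < q := by linarith
  have hgm := Real.geom_mean_le_arith_mean2_weighted (w₁ := (q - 1) / q) (w₂ := 1 / q)
    (p₁ := l * x ^ q) (p₂ := l ^ (1 - q) * y ^ q) (by bound) (by positivity) (by positivity)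
    (by positivity) (by field_simp; ring)
  have h1 : (l * x ^ q) ^ ((q - 1) / q) = l ^ ((q - 1) / q) * x ^ (q - 1) := by
    rw [Real.mul_rpow hl.le (by positivity), ← Real.rpow_mul hx]
    field_simp
  have h2 : (l ^ (1 - q) * y ^ q) ^ (1 / q) = l ^ ((1 - q) / q) * y := by
    rw [Real.mul_rpow (by positivity) (by positivity), ← Real.rpow_mul hl.le,
      ← Real.rpow_mul hy]
    field_simp
    rw [Real.rpow_one]
  have h3 : l ^ ((q - 1) / q) * l ^ ((1 - q) / q) = 1 := by
    rw [← Real.rpow_add hl]; field_simp; simp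
  rw [h1, h2] at hgm
  calc q * x ^ (q - 1) * y
      = q * ((l ^ ((q - 1) / q) * x ^ (q - 1)) * (l ^ ((1 - q) / q) * y)) := by
        linear_combination (q * x ^ (q - 1) * y) * h3.symm
    _ ≤ q * ((q - 1) / q * (l * x ^ q) + 1 / q * (l ^ (1 - q) * y ^ q)) := by gcongr
    _ = (q - 1) * l * x ^ q + l ^ (1 - q) * y ^ q := by field_simp

theorem rpow_one_div_le_of_le_add {q X F K a : ℝ} (hq : 1 ≤ q) (hX : 0 ≤ X) (hF : 0 ≤ F)
    (hK : 1 ≤ K) (ha : 0 ≤ a) (h : X ≤ F + K * a ^ q) :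
    X ^ (1 / q) ≤ K ^ (1 / q) * (a + F ^ (1 / q)) := by
  have hq0 : 0 < q := by linarith
  have hK1 : 1 ≤ K ^ (1 / q) := Real.one_le_rpow hK (by positivity)
  have hKa : (K * a ^ q) ^ (1 / q) = K ^ (1 / q) * a := by
    rw [Real.mul_rpow (by positivity) (by positivity), one_div,
      Real.rpow_rpow_inv ha hq0.ne']
  calc X ^ (1 / q) ≤ (F + K * a ^ q) ^ (1 / q) := by gcongr
    _ ≤ F ^ (1 / q) + (K * a ^ q) ^ (1 / q) :=
        Real.rpow_add_le_add_rpow hF (by positivity) (by positivity)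
          ((div_le_one hq0).2 hq)
    _ ≤ K ^ (1 / q) * (a + F ^ (1 / q)) := by
        rw [hKa]; nlinarith [Real.rpow_nonneg hF (1 / q)]

theorem sum_sq_norm_rpow_half_le_of_norm_le {ι E : Type*} [NormedAddCommGroup E] {c d : ι →₀ E}
    {K : ℝ} (hK : 0 ≤ K) (h : ∀ k, ‖d k‖ ≤ K * ‖c k‖) :
    (∑ k ∈ d.support, ‖d k‖ ^ 2) ^ ((1 : ℝ) / 2)
      ≤ K * (∑ k ∈ c.support, ‖c k‖ ^ 2) ^ ((1 : ℝ) / 2) := by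
  have hsupp : d.support ⊆ c.support := fun k hk => by
    by_contra hck
    have := h k
    rw [Finsupp.notMem_support_iff.1 hck, norm_zero, mul_zero] at this
    exact Finsupp.mem_support_iff.1 hk (norm_le_zero_iff.1 this)
  rw [← Real.sqrt_eq_rpow, ← Real.sqrt_eq_rpow, ← Real.sqrt_sq hK, ← Real.sqrt_mul (sq_nonneg K),
    Finset.sum_subset hsupp fun k _ hk => by rw [Finsupp.notMem_support_iff.1 hk, norm_zero,
      zero_pow two_ne_zero], Finset.mul_sum]
  gcongr with k
  rw [← mul_pow]
  exact pow_le_pow_left₀ (norm_nonneg _) (h k) 2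

def SupportedInAnnulus (n : ℕ) (N : ℝ) (c : (Fin n → ℤ) →₀ ℂ) : Prop :=
  ∀ k, c k ≠ 0 → N ≤ freqNorm n k ∧ freqNorm n k < 2 * N

noncomputable def torusEvolDerivCoeff (n : ℕ) (c : (Fin n → ℤ) →₀ ℂ) : (Fin n → ℤ) →₀ ℂ :=
  Finsupp.onFinset c.support (fun k => Complex.I * (∑ i, (k i : ℂ) ^ 2) * c k) fun k hk =>
    Finsupp.mem_support_iff.2 fun h => hk (by rw [h, mul_zero])

section Torus

variable {n : ℕ}

@[simp]
theorem torusEvolDerivCoeff_apply (c : (Fin n → ℤ) →₀ ℂ) (k : Fin n → ℤ) :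
    torusEvolDerivCoeff n c k = Complex.I * (∑ i, (k i : ℂ) ^ 2) * c k :=
  Finsupp.onFinset_apply

theorem support_torusEvolDerivCoeff_subset (c : (Fin n → ℤ) →₀ ℂ) :
    (torusEvolDerivCoeff n c).support ⊆ c.support :=
  Finsupp.support_onFinset_subset

theorem torusEvol_eq_sum_of_support_subset (c : (Fin n → ℤ) →₀ ℂ) {s : Finset (Fin n → ℤ)}
    (hs : c.support ⊆ s) (t : ℝ) (x : Fin n → ℝ) :
    torusEvol n c t x = ∑ k ∈ s, Complex.exp (Complex.I * (t : ℂ) * (∑ i, (k i : ℂ) ^ 2)) *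
      c k * Complex.exp (Complex.I * (∑ i, (k i : ℂ) * (x i : ℂ))) :=
  Finset.sum_subset hs fun k _ hk => by rw [Finsupp.notMem_support_iff.1 hk, mul_zero, zero_mul]

@[fun_prop]
theorem Continuous.torusEvol (c : (Fin n → ℤ) →₀ ℂ) {X : Type*} [TopologicalSpace X]
    {f : X → ℝ} {g : X → Fin n → ℝ} (hf : Continuous f) (hg : Continuous g) :
    Continuous fun p => torusEvol n c (f p) (g p) := by
  unfold _root_.torusEvol
  fun_prop

theorem hasDerivAt_torusEvol (c : (Fin n → ℤ) →₀ ℂ) (x : Fin n → ℝ) (t : ℝ) :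
    HasDerivAt (fun s => torusEvol n c s x) (torusEvol n (torusEvolDerivCoeff n c) t x) t := by
  rw [torusEvol_eq_sum_of_support_subset _ (support_torusEvolDerivCoeff_subset c)]
  unfold torusEvol
  refine HasDerivAt.fun_sum fun k _ => ?_
  have hphase : HasDerivAt (fun s : ℝ => Complex.I * (s : ℂ) * (∑ i, (k i : ℂ) ^ 2))
      (Complex.I * (∑ i, (k i : ℂ) ^ 2)) t := by
    simpa using ((Complex.ofRealCLM.hasDerivAt (x := t)).const_mul Complex.I).mul_const
      (∑ i, (k i : ℂ) ^ 2)
  refine ((hphase.cexp.mul_const (c k)).mul_const _).congr_deriv ?_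
  rw [torusEvolDerivCoeff_apply]
  ring

theorem supportedInAnnulus_torusEvolDerivCoeff {N : ℝ} {c : (Fin n → ℤ) →₀ ℂ}
    (hc : SupportedInAnnulus n N c) : SupportedInAnnulus n N (torusEvolDerivCoeff n c) :=
  fun k hk => hc k fun h => hk (by rw [torusEvolDerivCoeff_apply, h, mul_zero])

theorem norm_torusEvolDerivCoeff_le {N : ℝ} {c : (Fin n → ℤ) →₀ ℂ}
    (hc : SupportedInAnnulus n N c) (k : Fin n → ℤ) :
    ‖torusEvolDerivCoeff n c k‖ ≤ 4 * N ^ 2 * ‖c k‖ := by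
  rcases eq_or_ne (c k) 0 with hk | hk
  · simp [hk]
  have hsq : ∑ i, (k i : ℝ) ^ 2 = freqNorm n k ^ 2 := by
    rw [freqNorm, Real.sq_sqrt (by positivity)]
  have hlt : freqNorm n k ^ 2 < (2 * N) ^ 2 :=
    pow_lt_pow_left₀ (hc k hk).2 (Real.sqrt_nonneg _) two_ne_zero
  have hnorm : ‖(∑ i, (k i : ℂ) ^ 2)‖ = ∑ i, (k i : ℝ) ^ 2 := by
    rw [show (∑ i, (k i : ℂ) ^ 2) = ((∑ i, (k i : ℝ) ^ 2 : ℝ) : ℂ) by push_cast; rfl,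
      Complex.norm_real, Real.norm_of_nonneg (by positivity)]
  rw [torusEvolDerivCoeff_apply, norm_mul, norm_mul, Complex.norm_I, one_mul, hnorm]
  gcongr
  nlinarith

end Torus

theorem isCompact_torusCube (n : ℕ) : IsCompact (torusCube n) :=
  isCompact_univ_pi fun _ => isCompact_Icc

theorem Continuous.integrable_Ioc_prod_torusCube {n : ℕ} {f : ℝ × (Fin n → ℝ) → ℝ}
    (hf : Continuous f) :
    Integrable f ((volume.restrict (Set.Ioc (0 : ℝ) 1)).prod (volume.restrict (torusCube n))) := by
  rw [Measure.prod_restrict, ← Measure.volume_eq_prod]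
  exact (hf.continuousOn.integrableOn_compact (isCompact_Icc.prod (isCompact_torusCube n))).mono_set
    (Set.prod_mono Set.Ioc_subset_Icc_self subset_rfl)

section Maximal

variable {n : ℕ} (c : (Fin n → ℤ) →₀ ℂ) {q : ℝ}

theorem torusMax_nonneg (x : Fin n → ℝ) : 0 ≤ torusMax n c x :=
  Real.iSup_nonneg fun _ => Real.iSup_nonneg fun _ => norm_nonneg _

theorem torusMax_rpow_le (hq : 1 < q) (x : Fin n → ℝ) :
    torusMax n c x ^ q ≤ ‖torusEvol n c 0 x‖ ^ q + ∫ s in (0 : ℝ)..1,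
      q * ‖torusEvol n c s x‖ ^ (q - 1) * ‖torusEvol n (torusEvolDerivCoeff n c) s x‖ := by
  have hq0 : 0 < q := by linarith
  set G := ‖torusEvol n c 0 x‖ ^ q + ∫ s in (0 : ℝ)..1,
    q * ‖torusEvol n c s x‖ ^ (q - 1) * ‖torusEvol n (torusEvolDerivCoeff n c) s x‖
  have hbound : ∀ t ∈ Set.Icc (0 : ℝ) 1, ‖torusEvol n c t x‖ ^ q ≤ G := fun t ht =>
    norm_rpow_le_add_integral (hasDerivAt_torusEvol c x) (by fun_prop) hq ht.1 ht.2
  have hG : 0 ≤ G := (Real.rpow_nonneg (norm_nonneg _) q).trans (hbound 0 ⟨le_rfl, zero_le_one⟩)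
  have hGq : 0 ≤ G ^ q⁻¹ := Real.rpow_nonneg hG _
  have hmax : torusMax n c x ≤ G ^ q⁻¹ :=
    Real.iSup_le (fun t => Real.iSup_le (fun ht =>
      (Real.le_rpow_inv_iff_of_pos (norm_nonneg _) hG hq0).2 (hbound t ⟨ht.1.le, ht.2⟩)) hGq) hGq
  exact (Real.le_rpow_inv_iff_of_pos (torusMax_nonneg c x) hG hq0).1 hmax

theorem integral_torusMax_rpow_le (hq : 1 < q) {l : ℝ} (hl : 0 < l) :
    ∫ x in torusCube n, torusMax n c x ^ q ≤ (∫ x in torusCube n, ‖torusEvol n c 0 x‖ ^ q)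
      + ((q - 1) * l * ∫ t in Set.Ioc (0 : ℝ) 1, ∫ x in torusCube n, ‖torusEvol n c t x‖ ^ q)
      + l ^ (1 - q) * ∫ t in Set.Ioc (0 : ℝ) 1, ∫ x in torusCube n,
          ‖torusEvol n (torusEvolDerivCoeff n c) t x‖ ^ q := by
  set u := fun z : ℝ × (Fin n → ℝ) => torusEvol n c z.1 z.2
  set v := fun z : ℝ × (Fin n → ℝ) => torusEvol n (torusEvolDerivCoeff n c) z.1 z.2
  have hB : Integrable (fun z => q * ‖u z‖ ^ (q - 1) * ‖v z‖) _ :=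
    Continuous.integrable_Ioc_prod_torusCube (by fun_prop (disch := linarith))
  have hF : Integrable (fun z => ‖u z‖ ^ q) _ :=
    Continuous.integrable_Ioc_prod_torusCube (by fun_prop (disch := linarith))
  have hG : Integrable (fun z => ‖v z‖ ^ q) _ :=
    Continuous.integrable_Ioc_prod_torusCube (by fun_prop (disch := linarith))
  have hf : Integrable (fun x => ‖torusEvol n c 0 x‖ ^ q) (volume.restrict (torusCube n)) :=
    (by fun_prop (disch := linarith) : Continuous fun x => ‖torusEvol n c 0 x‖ ^ q)
      |>.continuousOn.integrableOn_compact (isCompact_torusCube n)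
  calc ∫ x in torusCube n, torusMax n c x ^ q
      ≤ ∫ x in torusCube n, (‖torusEvol n c 0 x‖ ^ q
          + ∫ t in Set.Ioc (0 : ℝ) 1, q * ‖u (t, x)‖ ^ (q - 1) * ‖v (t, x)‖) := by
        refine integral_mono_of_nonneg (Filter.Eventually.of_forall fun x => ?_)
          (hf.add hB.integral_prod_right) (Filter.Eventually.of_forall fun x => ?_)
        · exact Real.rpow_nonneg (torusMax_nonneg c x) q
        · simpa only [intervalIntegral.integral_of_le zero_le_one] using torusMax_rpow_le c hq x
    _ = (∫ x in torusCube n, ‖torusEvol n c 0 x‖ ^ q)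
          + ∫ z, q * ‖u z‖ ^ (q - 1) * ‖v z‖
            ∂(volume.restrict (Set.Ioc (0 : ℝ) 1)).prod (volume.restrict (torusCube n)) := by
        rw [integral_add hf hB.integral_prod_right, integral_prod_symm _ hB]
    _ ≤ (∫ x in torusCube n, ‖torusEvol n c 0 x‖ ^ q)
          + ∫ z, ((q - 1) * l * ‖u z‖ ^ q + l ^ (1 - q) * ‖v z‖ ^ q)
            ∂(volume.restrict (Set.Ioc (0 : ℝ) 1)).prod (volume.restrict (torusCube n)) := by
        exact add_le_add le_rfl (integral_mono hB ((hF.const_mul _).add (hG.const_mul _)) fun z =>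
          mul_rpow_sub_one_mul_le hq hl (norm_nonneg _) (norm_nonneg _))
    _ = _ := by
        rw [integral_add (hF.const_mul _) (hG.const_mul _), integral_const_mul,
          integral_const_mul, integral_prod _ hF, integral_prod _ hG, add_assoc]

theorem integral_torusMax_rpow_le_of_le (hq : 1 < q) {l a : ℝ} (hl : 0 < l) (ha : 0 ≤ a)
    (hu : ∫ t in Set.Ioc (0 : ℝ) 1, ∫ x in torusCube n, ‖torusEvol n c t x‖ ^ q ≤ a ^ q)
    (hv : ∫ t in Set.Ioc (0 : ℝ) 1, ∫ x in torusCube n,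
      ‖torusEvol n (torusEvolDerivCoeff n c) t x‖ ^ q ≤ (l * a) ^ q) :
    ∫ x in torusCube n, torusMax n c x ^ q
      ≤ (∫ x in torusCube n, ‖torusEvol n c 0 x‖ ^ q) + q * l * a ^ q := by
  have hpow : l ^ (1 - q) * (l * a) ^ q = l * a ^ q := by
    rw [Real.mul_rpow hl.le ha, ← mul_assoc, ← Real.rpow_add hl, sub_add_cancel, Real.rpow_one]
  have hcoeff : 0 ≤ (q - 1) * l := mul_nonneg (by linarith) hl.le
  calc ∫ x in torusCube n, torusMax n c x ^ q
      ≤ (∫ x in torusCube n, ‖torusEvol n c 0 x‖ ^ q)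
        + (q - 1) * l * a ^ q + l ^ (1 - q) * (l * a) ^ q := by
        refine (integral_torusMax_rpow_le c hq hl).trans ?_
        gcongr
    _ = (∫ x in torusCube n, ‖torusEvol n c 0 x‖ ^ q) + q * l * a ^ q := by
        rw [hpow]; ring

end Maximal

theorem maximal_from_strichartz_general (n : ℕ) (q : ℝ) (hq : 2 ≤ q) :
    ∃ C : ℝ, 0 < C ∧ ∀ N : ℝ, 1 ≤ N → ∀ A : ℝ, 0 < A →
      (∀ c' : (Fin n → ℤ) →₀ ℂ,
        (∀ k, c' k ≠ 0 → N ≤ freqNorm n k ∧ freqNorm n k < 2 * N) →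
        (∫ t in Set.Ioc (0 : ℝ) 1, ∫ x in torusCube n, ‖torusEvol n c' t x‖ ^ q) ^ (1 / q)
          ≤ A * (∑ k ∈ c'.support, ‖c' k‖ ^ 2) ^ ((1 : ℝ) / 2)) →
      ∀ c : (Fin n → ℤ) →₀ ℂ,
        (∀ k, c k ≠ 0 → N ≤ freqNorm n k ∧ freqNorm n k < 2 * N) →
        (∫ x in torusCube n, torusMax n c x ^ q) ^ (1 / q)
          ≤ C * (N ^ (2 / q) * A * (∑ k ∈ c.support, ‖c k‖ ^ 2) ^ ((1 : ℝ) / 2)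
            + (∫ x in torusCube n, ‖torusEvol n c 0 x‖ ^ q) ^ (1 / q)) := by
  have hq0 : 0 < q := by linarith
  refine ⟨(4 * q) ^ (1 / q), by positivity, fun N hN A hA hS c hc => ?_⟩
  set a := A * (∑ k ∈ c.support, ‖c k‖ ^ 2) ^ ((1 : ℝ) / 2)
  have ha : 0 ≤ a := by positivity
  have hl : 0 < 4 * N ^ 2 := by positivity
  have hu : ∫ t in Set.Ioc (0 : ℝ) 1, ∫ x in torusCube n, ‖torusEvol n c t x‖ ^ q ≤ a ^ q := by
    rw [← Real.rpow_inv_le_iff_of_pos (by positivity) ha hq0, ← one_div]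
    exact hS c hc
  have hv : ∫ t in Set.Ioc (0 : ℝ) 1, ∫ x in torusCube n,
      ‖torusEvol n (torusEvolDerivCoeff n c) t x‖ ^ q ≤ (4 * N ^ 2 * a) ^ q := by
    rw [← Real.rpow_inv_le_iff_of_pos (by positivity) (by positivity) hq0, ← one_div]
    refine (hS _ (supportedInAnnulus_torusEvolDerivCoeff hc)).trans ?_
    rw [mul_left_comm]
    exact mul_le_mul_of_nonneg_left (sum_sq_norm_rpow_half_le_of_norm_le hl.le
      (norm_torusEvolDerivCoeff_le hc)) hA.le
  have hscale : q * (4 * N ^ 2) * a ^ q = 4 * q * (N ^ (2 / q) * a) ^ q := by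
    rw [Real.mul_rpow (by positivity) ha, ← Real.rpow_mul (by positivity),
      div_mul_cancel₀ _ hq0.ne', Real.rpow_two]
    ring
  rw [mul_assoc (N ^ (2 / q))]
  refine rpow_one_div_le_of_le_add (by linarith) (integral_nonneg fun x => by
    have := torusMax_nonneg c x; positivity) (integral_nonneg fun x => by positivity)
    (by linarith) (by positivity) ?_
  exact (integral_torusMax_rpow_le_of_le c (by linarith) hl ha hu hv).trans_eq (by rw [hscale])

/-- From frequency-localized Strichartz estimates to maximal estimates (Lemma 5.2, torus
version): if all evolutions with frequencies in the annulus `N ≤ |k| < 2N` satisfy an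
`L^q((0,1]×[0,2π]ⁿ)` Strichartz bound with constant `A`, then the maximal function of any
such evolution satisfies
`‖sup_{0<t≤1}|u|‖_{L^q} ≤ C (N^{2/q} A ‖c‖_{ℓ²} + ‖f‖_{L^q})`. -/
theorem maximal_from_strichartz (n : ℕ) (hn : 1 ≤ n) (q : ℝ) (hq : 2 ≤ q) :
    ∃ C : ℝ, 0 < C ∧ ∀ N : ℝ, 1 ≤ N → ∀ A : ℝ, 0 < A →
      (∀ c' : (Fin n → ℤ) →₀ ℂ,
        (∀ k, c' k ≠ 0 → N ≤ freqNorm n k ∧ freqNorm n k < 2 * N) →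
        (∫ t in Set.Ioc (0 : ℝ) 1, ∫ x in torusCube n, ‖torusEvol n c' t x‖ ^ q) ^ (1 / q)
          ≤ A * (∑ k ∈ c'.support, ‖c' k‖ ^ 2) ^ ((1 : ℝ) / 2)) →
      ∀ c : (Fin n → ℤ) →₀ ℂ,
        (∀ k, c k ≠ 0 → N ≤ freqNorm n k ∧ freqNorm n k < 2 * N) →
        (∫ x in torusCube n, torusMax n c x ^ q) ^ (1 / q)
          ≤ C * (N ^ (2 / q) * A * (∑ k ∈ c.support, ‖c k‖ ^ 2) ^ ((1 : ℝ) / 2)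
            + (∫ x in torusCube n, ‖torusEvol n c 0 x‖ ^ q) ^ (1 / q)) :=
  maximal_from_strichartz_general n q hq
end

section
/- Strichartz estimate on the circle, L⁶ version (Lemma 6.2, after Bourgain): For every s > 0 there is a constant C = C(s) such that for every finitely supported c : ℤ → ℂ, the evolution u(t,x) = Σ_{k∈ℤ} e^{itk²} c_k e^{ikx} satisfies ‖u‖_{L⁶((0,1] × [0,2π], dt dx)} ≤ C (Σ_{k∈ℤ} (1+k²)^s |c_k|²)^{1/2}. -/
open MeasureTheory Finset

/-- The free Schrödinger evolution `u(t,x) = ∑ₖ e^{itk²} cₖ e^{ikx}` of the trigonometric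
polynomial with finitely supported Fourier coefficients `c : ℤ → ℂ`. -/
noncomputable def circleEvol (c : ℤ →₀ ℂ) (t : ℝ) (x : ℝ) : ℂ :=
  ∑ k ∈ c.support,
    Complex.exp (Complex.I * (t : ℂ) * (k : ℂ) ^ 2) * c k *
      Complex.exp (Complex.I * (k : ℂ) * (x : ℂ))

/-!
Expanding `u³` as a trigonometric polynomial in `(t, x)` with frequencies
`(k₁² + k₂² + k₃², k₁ + k₂ + k₃)`, Parseval on the torus writes `‖u‖⁶_{L⁶}` as the sum, over
frequency pairs `(m, n)`, of `|∑ c_{k₁} c_{k₂} c_{k₃}|²` taken over the triples with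
`∑ kᵢ = n`, `∑ kᵢ² = m`. Cauchy–Schwarz with weights `∏ (1 + kᵢ²)^s` bounds each term by
`∑_{fibre} ∏ (1 + kᵢ²)^{-s}` times the weighted mass of the fibre, and the masses add up to
`(∑ₖ (1 + k²)^s |cₖ|²)³`. On a fibre some `kᵢ²` is at least `m / 3`, and the triples correspond
injectively to the Eisenstein integers `(k₁ - k₂) + (k₂ - k₃)ω` of norm `(3m - n²) / 2`. Since
`ℤ[ω]` is Euclidean, the divisor bound counts these by `O(m^ε)`, so the fibre sums are bounded
uniformly.
-/

open UniqueFactorizationMonoid Complex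
open scoped Real ComplexConjugate

theorem add_one_le_pow_of_two_le {y : ℝ} (hy : 2 ≤ y) (e : ℕ) : (e + 1 : ℝ) ≤ y ^ e := by
  have := one_add_mul_le_pow (a := y - 1) (by linarith) e
  rw [add_sub_cancel] at this
  nlinarith

theorem add_one_le_mul_rpow_pow {x ε : ℝ} (hx : 2 ≤ x) (hε : 0 < ε) (e : ℕ) :
    (e + 1 : ℝ) ≤ (1 + (ε * Real.log 2)⁻¹) * (x ^ ε) ^ e := by
  set a := ε * Real.log 2
  have ha : 0 < a := mul_pos hε (Real.log_pos one_lt_two)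
  -- `2 ^ ε = exp a ≥ 1 + a`, then Bernoulli.
  have h2 : 1 + a ≤ x ^ ε := by
    calc 1 + a ≤ Real.exp a := by linarith [Real.add_one_le_exp a]
      _ = (2 : ℝ) ^ ε := by rw [Real.rpow_def_of_pos two_pos, mul_comm]
      _ ≤ x ^ ε := Real.rpow_le_rpow zero_le_two hx hε.le
  have hbern : 1 + e * a ≤ (x ^ ε) ^ e :=
    (one_add_mul_le_pow (by linarith) e).trans (pow_le_pow_left₀ (by linarith) h2 e)
  calc (e + 1 : ℝ) ≤ (1 + a⁻¹) * (1 + e * a) := by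
        field_simp
        nlinarith [mul_nonneg (mul_nonneg (Nat.cast_nonneg (α := ℝ) e) ha.le) ha.le]
    _ ≤ (1 + a⁻¹) * (x ^ ε) ^ e := by gcongr

/-- The divisor bound `d(n) ≪_ε n^ε`, abstracted: `T` plays the prime factors of `n`,
`e p` their multiplicities and `w p` their sizes. -/
theorem exists_prod_add_one_le_mul_prod_pow_rpow {α : Type*} [DecidableEq α] (w : α → ℕ)
    (hw : ∀ B, {p | w p ≤ B}.Finite) {ε : ℝ} (hε : 0 < ε) :
    ∃ C : ℝ, 1 ≤ C ∧ ∀ (T : Finset α) (e : α → ℕ), (∀ p ∈ T, 2 ≤ w p) →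
      (∏ p ∈ T, (e p + 1 : ℝ)) ≤ C * (∏ p ∈ T, (w p : ℝ) ^ e p) ^ ε := by
  set C₀ : ℝ := 1 + (ε * Real.log 2)⁻¹
  have hC₀ : 1 ≤ C₀ := le_add_of_nonneg_right (inv_nonneg.2 (by positivity))
  -- only the finitely many `p` with `w p ^ ε < 2` can contribute a factor `C₀`
  set small := (hw ⌊(2 : ℝ) ^ ε⁻¹⌋₊).toFinset
  refine ⟨C₀ ^ #small, one_le_pow₀ hC₀, fun T e hT => ?_⟩
  have hfactor : ∀ p ∈ T, (e p + 1 : ℝ) ≤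
      (if p ∈ small then C₀ else 1) * ((w p : ℝ) ^ ε) ^ e p := by
    intro p hp
    have hwp : (2 : ℝ) ≤ w p := by exact_mod_cast hT p hp
    split_ifs with hsmall
    · exact add_one_le_mul_rpow_pow hwp hε (e p)
    · rw [one_mul]
      refine add_one_le_pow_of_two_le ?_ _
      have hlarge : (2 : ℝ) ^ ε⁻¹ < w p := by
        exact (Nat.floor_lt (by positivity)).1 (by simpa [small] using hsmall)
      calc (2 : ℝ) = ((2 : ℝ) ^ ε⁻¹) ^ ε := by
            rw [← Real.rpow_mul zero_le_two, inv_mul_cancel₀ hε.ne', Real.rpow_one]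
        _ ≤ (w p : ℝ) ^ ε := Real.rpow_le_rpow (by positivity) hlarge.le hε.le
  calc (∏ p ∈ T, (e p + 1 : ℝ))
      ≤ ∏ p ∈ T, (if p ∈ small then C₀ else 1) * ((w p : ℝ) ^ ε) ^ e p :=
        prod_le_prod (fun p _ => by positivity) hfactor
    _ = C₀ ^ #(T ∩ small) * (∏ p ∈ T, (w p : ℝ) ^ e p) ^ ε := by
        rw [prod_mul_distrib, prod_ite_mem, prod_const,
          ← Real.finsetProd_rpow _ _ (fun p _ => by positivity)]
        congr 1
        refine prod_congr rfl fun p _ => ?_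
        rw [← Real.rpow_natCast, ← Real.rpow_natCast, ← Real.rpow_mul (Nat.cast_nonneg _),
          ← Real.rpow_mul (Nat.cast_nonneg _), mul_comm]
    _ ≤ C₀ ^ #small * (∏ p ∈ T, (w p : ℝ) ^ e p) ^ ε :=
        mul_le_mul_of_nonneg_right
          (pow_le_pow_right₀ hC₀ (card_le_card inter_subset_right)) (by positivity)

section UniqueFactorization

variable {R : Type*} [CommMonoidWithZero R] [NormalizationMonoid R]
  [UniqueFactorizationMonoid R] [DecidableEq R]

theorem card_le_card_mul_prod_count_add_one {x : R} (hx : x ≠ 0) {U : Finset R}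
    (hU : ∀ u : Rˣ, (u : R) ∈ U) {F : Finset R} (hF : ∀ z ∈ F, z ∣ x) :
    #F ≤ #U * ∏ p ∈ (normalizedFactors x).toFinset, ((normalizedFactors x).count p + 1) := by
  have hF0 : ∀ z ∈ F, z ≠ 0 := fun z hz h => hx (zero_dvd_iff.1 (h ▸ hF z hz))
  -- Divisors with the same normalized factors differ by a unit, and the normalized factors of
  -- a divisor of `x` form a sub-multiset of those of `x`.
  refine (card_le_mul_card_image (f := normalizedFactors) F #U fun s hs => ?_).trans
    (Nat.mul_le_mul_left _ ?_)
  · obtain ⟨z₀, hz₀, rfl⟩ := mem_image.1 hs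
    refine (card_le_card fun z hz => ?_).trans (card_image_le (f := (z₀ * ·)))
    obtain ⟨hz, hzz₀⟩ := mem_filter.1 hz
    obtain ⟨u, rfl⟩ := ((associated_iff_normalizedFactors_eq_normalizedFactors
      (hF0 z₀ hz₀) (hF0 z hz)).2 hzz₀.symm)
    exact mem_image_of_mem _ (hU u)
  · rw [← Multiset.card_Iic]
    refine card_le_card fun s hs => ?_
    obtain ⟨z, hz, rfl⟩ := mem_image.1 hs
    exact mem_Iic.2 ((dvd_iff_normalizedFactors_le_normalizedFactors (hF0 z hz) hx).1 (hF z hz))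

theorem prod_pow_count_normalizedFactors_eq (f : R →* ℕ) {x : R} (hx : x ≠ 0) :
    ∏ p ∈ (normalizedFactors x).toFinset, f p ^ (normalizedFactors x).count p = f x := by
  rw [← associated_iff_eq.1 ((prod_normalizedFactors hx).map f), prod_multiset_count, map_prod]
  simp only [map_pow]

end UniqueFactorization

/-- `ℤ[ω]` with `ω² = ω - 1`, i.e. `ω = e^{iπ/3}`: the norm of `x + yω` is `x² + xy + y²`. -/
abbrev EisensteinInt := QuadraticAlgebra ℤ (-1) 1

namespace EisensteinInt

theorem norm_eq (z : EisensteinInt) : z.norm = z.re ^ 2 + z.re * z.im + z.im ^ 2 := by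
  simp only [QuadraticAlgebra.norm_def]; ring

theorem four_mul_norm (z : EisensteinInt) :
    4 * z.norm = (2 * z.re + z.im) ^ 2 + 3 * z.im ^ 2 := by
  rw [norm_eq]; ring

theorem norm_nonneg (z : EisensteinInt) : 0 ≤ z.norm := by
  nlinarith [four_mul_norm z, sq_nonneg (2 * z.re + z.im), sq_nonneg z.im]

theorem norm_eq_zero {z : EisensteinInt} : z.norm = 0 ↔ z = 0 := by
  refine ⟨fun h => ?_, fun h => h ▸ QuadraticAlgebra.norm_zero⟩
  have h4 := four_mul_norm z
  have him : z.im = 0 := by nlinarith [sq_nonneg (2 * z.re + z.im), sq_nonneg z.im]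
  have hre : z.re = 0 := by rw [him] at h4; nlinarith
  ext <;> assumption

theorem norm_pos {z : EisensteinInt} (hz : z ≠ 0) : 0 < z.norm :=
  (norm_nonneg z).lt_of_ne (Ne.symm (mt norm_eq_zero.1 hz))

/-- Rounded division: `x * star y / y.norm` rounded to the nearest lattice point. -/
def quot (x y : EisensteinInt) : EisensteinInt :=
  ⟨(x * star y).re.bdiv (y.norm).toNat, (x * star y).im.bdiv (y.norm).toNat⟩

theorem norm_sub_mul_quot_lt (x : EisensteinInt) {y : EisensteinInt} (hy : y ≠ 0) :
    (x - y * quot x y).norm < y.norm := by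
  set n := (y.norm).toNat
  have hn : (n : ℤ) = y.norm := Int.toNat_of_nonneg (norm_nonneg y)
  have hn0 : 0 < n := by have := norm_pos hy; omega
  -- `(x - y q) ȳ = x ȳ - n q` has both coordinates balanced residues mod `n`
  have hr : (x - y * quot x y) * star y =
      ⟨(x * star y).re.bmod n, (x * star y).im.bmod n⟩ := by
    have hyy : y * star y = (n : EisensteinInt) := by
      rw [← QuadraticAlgebra.algebraMap_norm_eq_mul_star, ← hn]; rfl
    have key : (x - y * quot x y) * star y = x * star y - (n : EisensteinInt) * quot x y := by
      rw [← hyy]; ring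
    have hq : quot x y = ⟨(x * star y).re.bdiv n, (x * star y).im.bdiv n⟩ := rfl
    rw [key, hq]
    generalize x * star y = p
    ext
    · simp
      linarith [Int.bmod_add_bdiv p.re n]
    · simp
      linarith [Int.bmod_add_bdiv p.im n]
  have hbal : ∀ r : ℤ, -(n : ℤ) ≤ 2 * r.bmod n ∧ 2 * r.bmod n ≤ n := fun r => by
    have := Int.le_bmod (x := r) hn0
    have := Int.bmod_lt (x := r) hn0
    omega
  have hbound : ((x - y * quot x y) * star y).norm < n * n := by
    rw [hr, norm_eq]
    obtain ⟨h1, h2⟩ := hbal (x * star y).re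
    obtain ⟨h3, h4⟩ := hbal (x * star y).im
    nlinarith
  rw [map_mul, QuadraticAlgebra.norm_star, ← hn] at hbound
  rw [← hn]
  exact lt_of_mul_lt_mul_right hbound (Int.natCast_nonneg n)

instance : EuclideanDomain EisensteinInt :=
  { (inferInstance : CommRing EisensteinInt), (inferInstance : Nontrivial EisensteinInt) with
    quotient := quot
    quotient_zero := fun x => by ext <;> simp [quot]
    remainder := fun x y => x - y * quot x y
    quotient_mul_add_remainder_eq := fun x y => by ring
    r := InvImage (· < ·) fun z => (z.norm).natAbs
    r_wellFounded := (measure _).wf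
    remainder_lt := fun x y hy => by
      have := norm_sub_mul_quot_lt x hy
      have := norm_nonneg (x - y * quot x y)
      simp only [InvImage]; omega
    mul_left_not_lt := fun x y hy => by
      have := norm_pos hy
      have := norm_nonneg x
      simp only [InvImage, map_mul, Int.natAbs_mul, not_lt]
      exact Nat.le_mul_of_pos_right _ (by omega) }

noncomputable instance : NormalizationMonoid EisensteinInt :=
  UniqueFactorizationMonoid.strongNormalizationMonoid.toNormalizationMonoid

theorem finite_setOf_natAbs_norm_le (B : ℕ) :
    {z : EisensteinInt | z.norm.natAbs ≤ B}.Finite := by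
  refine ((Set.finite_Icc (-(2 * B : ℤ)) (2 * B)).prod (Set.finite_Icc (-(2 * B : ℤ)) (2 * B))
    |>.image fun p => (⟨p.1, p.2⟩ : EisensteinInt)).subset fun z hz => ?_
  have h4 := four_mul_norm z
  have hB : z.norm ≤ B := by have := norm_nonneg z; simp only [Set.mem_ofPred_eq] at hz; omega
  refine ⟨(z.re, z.im), ⟨⟨?_, ?_⟩, ⟨?_, ?_⟩⟩, rfl⟩ <;>
    nlinarith [sq_nonneg (2 * z.re + z.im), sq_nonneg (z.re + 2 * z.im), norm_eq z,
      sq_nonneg (z.re - 1), sq_nonneg (z.re + 1), sq_nonneg (z.im - 1), sq_nonneg (z.im + 1)]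

theorem two_le_natAbs_norm_of_prime {p : EisensteinInt} (hp : Prime p) : 2 ≤ p.norm.natAbs := by
  have h0 : p.norm ≠ 0 := mt norm_eq_zero.1 hp.ne_zero
  have h1 : p.norm.natAbs ≠ 1 := fun h =>
    hp.not_isUnit (QuadraticAlgebra.isUnit_iff_norm_isUnit.2 (Int.isUnit_iff_natAbs_eq.2 h))
  omega

theorem exists_card_norm_eq_le (δ : ℝ) (hδ : 0 < δ) :
    ∃ C : ℝ, 0 < C ∧ ∀ M : ℤ, 0 < M → ∀ F : Finset EisensteinInt, (∀ z ∈ F, z.norm = M) →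
      (#F : ℝ) ≤ C * (M : ℝ) ^ δ := by
  classical
  let absNorm : EisensteinInt →* ℕ := (Int.natAbsHom : ℤ →* ℕ).comp QuadraticAlgebra.norm
  obtain ⟨C, hC, hCbound⟩ := exists_prod_add_one_le_mul_prod_pow_rpow (fun z => absNorm z)
    finite_setOf_natAbs_norm_le (half_pos hδ)
  set U := (finite_setOf_natAbs_norm_le 1).toFinset
  have hU : ∀ u : EisensteinIntˣ, (u : EisensteinInt) ∈ U := fun u => by
    simpa [U] using (Int.isUnit_iff_natAbs_eq.1
      (QuadraticAlgebra.isUnit_iff_norm_isUnit.1 u.isUnit)).le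
  have hU0 : (0 : ℝ) < #U := by exact_mod_cast card_pos.2 ⟨1, hU 1⟩
  refine ⟨#U * C, by positivity, fun M hM F hF => ?_⟩
  set x : EisensteinInt := Int.cast M
  have hx : x ≠ 0 := by simpa [x] using hM.ne'
  have hdvd : ∀ z ∈ F, z ∣ x := fun z hz => ⟨star z, by
    rw [← QuadraticAlgebra.algebraMap_norm_eq_mul_star, hF z hz]; rfl⟩
  have hx_norm : (absNorm x : ℝ) = (M : ℝ) ^ 2 := by
    simp [absNorm, x, QuadraticAlgebra.norm_intCast, Int.natAbs_pow, abs_of_pos hM]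
  have hcount := hCbound (normalizedFactors x).toFinset (fun p => (normalizedFactors x).count p)
    fun p hp => two_le_natAbs_norm_of_prime
      (prime_of_normalized_factor p (Multiset.mem_toFinset.1 hp))
  have hprod : ∏ p ∈ (normalizedFactors x).toFinset,
      (absNorm p : ℝ) ^ (normalizedFactors x).count p = (M : ℝ) ^ 2 := by
    rw [← hx_norm, ← prod_pow_count_normalizedFactors_eq absNorm hx]
    push_cast; rfl
  have hM2 : ((M : ℝ) ^ 2) ^ (δ / 2) = (M : ℝ) ^ δ := by
    rw [← Real.rpow_natCast, ← Real.rpow_mul (by positivity)]; ring_nf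
  have hF_le : (#F : ℝ) ≤ #U * ∏ p ∈ (normalizedFactors x).toFinset,
      ((normalizedFactors x).count p + 1 : ℝ) := by
    exact_mod_cast card_le_card_mul_prod_count_add_one hx hU hdvd
  calc (#F : ℝ) ≤ #U * (C * (M : ℝ) ^ δ) := by
        rw [← hM2, ← hprod]
        exact hF_le.trans (mul_le_mul_of_nonneg_left hcount (Nat.cast_nonneg _))
    _ = #U * C * (M : ℝ) ^ δ := by ring

end EisensteinInt

def tripleDiff (a : Fin 3 → ℤ) : EisensteinInt := ⟨a 0 - a 1, a 1 - a 2⟩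

theorem two_mul_norm_tripleDiff (a : Fin 3 → ℤ) :
    2 * (tripleDiff a).norm = 3 * ∑ i, a i ^ 2 - (∑ i, a i) ^ 2 := by
  simp only [EisensteinInt.norm_eq, tripleDiff, Fin.sum_univ_three]; ring

theorem tripleDiff_injOn (n : ℤ) : Set.InjOn tripleDiff {a | ∑ i, a i = n} := by
  intro a ha b hb hab
  simp only [Set.mem_ofPred_eq, Fin.sum_univ_three] at ha hb
  have h0 := congrArg QuadraticAlgebra.re hab
  have h1 := congrArg QuadraticAlgebra.im hab
  simp only [tripleDiff] at h0 h1
  funext i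
  fin_cases i <;> simp <;> omega

theorem exists_card_le_of_sum_eq_of_sum_sq_eq (δ : ℝ) (hδ : 0 < δ) :
    ∃ C : ℝ, 0 < C ∧ ∀ (n m : ℤ), 0 ≤ m → ∀ S : Finset (Fin 3 → ℤ),
      (∀ a ∈ S, ∑ i, a i = n ∧ ∑ i, a i ^ 2 = m) → (#S : ℝ) ≤ C * (1 + m) ^ δ := by
  classical
  obtain ⟨C, hC, hCbound⟩ := EisensteinInt.exists_card_norm_eq_le δ hδ
  refine ⟨(C + 1) * 2 ^ δ, by positivity, fun n m hm S hS => ?_⟩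
  rcases S.eq_empty_or_nonempty with rfl | ⟨a₀, ha₀⟩
  · have : (0 : ℝ) ≤ m := by exact_mod_cast hm
    simp only [card_empty, Nat.cast_zero]
    positivity
  set M := (tripleDiff a₀).norm
  have hnorm : ∀ z ∈ S.image tripleDiff, z.norm = M := by
    simp only [mem_image, forall_exists_index, and_imp]
    rintro _ a ha rfl
    have h2a := two_mul_norm_tripleDiff a
    have h2a₀ := two_mul_norm_tripleDiff a₀
    rw [(hS a ha).1, (hS a ha).2] at h2a
    rw [(hS a₀ ha₀).1, (hS a₀ ha₀).2] at h2a₀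
    omega
  have hcard : #S = #(S.image tripleDiff) :=
    (card_image_of_injOn ((tripleDiff_injOn n).mono fun a ha => (hS a ha).1)).symm
  have h1m : (1 : ℝ) ≤ 1 + m := le_add_of_nonneg_right (by exact_mod_cast hm)
  rcases (EisensteinInt.norm_nonneg (tripleDiff a₀)).eq_or_lt with hM | hM
  · have : #(S.image tripleDiff) ≤ 1 := card_le_one.2 fun z hz w hw => by
      rw [EisensteinInt.norm_eq_zero.1 ((hnorm z hz).trans hM.symm),
        EisensteinInt.norm_eq_zero.1 ((hnorm w hw).trans hM.symm)]
    calc (#S : ℝ) ≤ 1 := by exact_mod_cast hcard ▸ this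
      _ ≤ (C + 1) * 2 ^ δ * (1 + m) ^ δ := by
        refine one_le_mul_of_one_le_of_one_le (one_le_mul_of_one_le_of_one_le (by linarith)
          (Real.one_le_rpow one_le_two hδ.le)) (Real.one_le_rpow h1m hδ.le)
  · have hMm : (M : ℝ) ≤ 2 * (1 + m) := by
      have h := two_mul_norm_tripleDiff a₀
      rw [(hS a₀ ha₀).1, (hS a₀ ha₀).2] at h
      have : M ≤ 2 * (1 + m) := by nlinarith [sq_nonneg n]
      exact_mod_cast this
    calc (#S : ℝ) ≤ C * (M : ℝ) ^ δ := hcard ▸ hCbound M hM _ hnorm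
      _ ≤ C * (2 * (1 + m)) ^ δ := by gcongr
      _ ≤ (C + 1) * 2 ^ δ * (1 + m) ^ δ := by
        rw [Real.mul_rpow zero_le_two (by linarith)]
        have : 0 ≤ (2 : ℝ) ^ δ * (1 + m) ^ δ := by positivity
        nlinarith

theorem div_card_rpow_le_prod_rpow {ι : Type*} [Fintype ι] [Nonempty ι] (a : ι → ℝ) {s : ℝ}
    (hs : 0 ≤ s) : ((1 + ∑ i, a i ^ 2) / Fintype.card ι) ^ s ≤ ∏ i, (1 + a i ^ 2) ^ s := by
  have hcard : (0 : ℝ) < Fintype.card ι := by exact_mod_cast Fintype.card_pos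
  -- some coordinate carries at least the average of the squares
  obtain ⟨j, -, hj⟩ := exists_le_of_sum_le (s := univ)
    (f := fun _ => (∑ i, a i ^ 2) / Fintype.card ι) (g := fun i => a i ^ 2) univ_nonempty
    (by simp [mul_div_cancel₀ _ hcard.ne'])
  have hmean : (1 + ∑ i, a i ^ 2) / Fintype.card ι ≤ 1 + a j ^ 2 := by
    have h1 : 1 / (Fintype.card ι : ℝ) ≤ 1 := by
      rw [div_le_one hcard]; exact_mod_cast Fintype.card_pos
    rw [add_div]; linarith
  calc ((1 + ∑ i, a i ^ 2) / Fintype.card ι) ^ s ≤ (1 + a j ^ 2) ^ s :=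
        Real.rpow_le_rpow (by positivity) hmean hs
    _ ≤ ∏ i, (1 + a i ^ 2) ^ s := by
        classical
        have hone : ∀ i ∈ univ.erase j, 1 ≤ (1 + a i ^ 2) ^ s :=
          fun i _ => Real.one_le_rpow (by nlinarith [sq_nonneg (a i)]) hs
        rw [← mul_prod_erase _ _ (mem_univ j)]
        exact le_mul_of_one_le_right (by positivity) (one_le_prod hone)

theorem exists_sum_inv_prod_rpow_le (s : ℝ) (hs : 0 < s) :
    ∃ A : ℝ, 0 < A ∧ ∀ (n m : ℤ) (S : Finset (Fin 3 → ℤ)),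
      (∀ a ∈ S, ∑ i, a i = n ∧ ∑ i, a i ^ 2 = m) →
        ∑ a ∈ S, (∏ i, (1 + (a i : ℝ) ^ 2) ^ s)⁻¹ ≤ A := by
  obtain ⟨C, hC, hcard⟩ := exists_card_le_of_sum_eq_of_sum_sq_eq s hs
  refine ⟨C * 3 ^ s, by positivity, fun n m S hS => ?_⟩
  rcases S.eq_empty_or_nonempty with rfl | ⟨a₀, ha₀⟩
  · simp only [sum_empty]; positivity
  have hm : 0 ≤ m := (hS a₀ ha₀).2 ▸ sum_nonneg fun i _ => sq_nonneg (a₀ i)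
  have hm' : (0 : ℝ) < 1 + m := add_pos_of_pos_of_nonneg one_pos (by exact_mod_cast hm)
  have hterm : ∀ a ∈ S, (∏ i, (1 + (a i : ℝ) ^ 2) ^ s)⁻¹ ≤ (3 : ℝ) ^ s / (1 + (m : ℝ)) ^ s := by
    intro a ha
    have hW := div_card_rpow_le_prod_rpow (fun i => (a i : ℝ)) hs.le
    have hsum : ∑ i, (a i : ℝ) ^ 2 = m := by exact_mod_cast (hS a ha).2
    rw [hsum, Fintype.card_fin, Nat.cast_ofNat, Real.div_rpow hm'.le zero_le_three] at hW
    rw [← inv_div]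
    exact inv_anti₀ (by positivity) hW
  calc ∑ a ∈ S, (∏ i, (1 + (a i : ℝ) ^ 2) ^ s)⁻¹ ≤ #S * ((3 : ℝ) ^ s / (1 + (m : ℝ)) ^ s) := by
        simpa using sum_le_sum hterm
    _ ≤ C * (1 + (m : ℝ)) ^ s * ((3 : ℝ) ^ s / (1 + (m : ℝ)) ^ s) := by
        gcongr; exact hcard n m hm S hS
    _ = C * 3 ^ s := by field_simp

theorem sq_norm_sum_le_sum_inv_mul_sum {ι : Type*} (S : Finset ι) (b : ι → ℂ) {W : ι → ℝ}
    (hW : ∀ i ∈ S, 0 < W i) :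
    ‖∑ i ∈ S, b i‖ ^ 2 ≤ (∑ i ∈ S, (W i)⁻¹) * ∑ i ∈ S, W i * ‖b i‖ ^ 2 := by
  refine (pow_le_pow_left₀ (norm_nonneg _) (norm_sum_le _ _) 2).trans
    (sum_sq_le_sum_mul_sum_of_sq_le_mul S (fun i hi => (inv_pos.2 (hW i hi)).le)
      (fun i hi => by have := hW i hi; positivity) fun i hi => ?_)
  rw [← mul_assoc, inv_mul_cancel₀ (hW i hi).ne', one_mul]

theorem sum_sq_norm_sum_fiberwise_le {ι κ : Type*} [DecidableEq κ] (S : Finset ι) (f : ι → κ)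
    (b : ι → ℂ) {W : ι → ℝ} (hW : ∀ i ∈ S, 0 < W i) {A : ℝ}
    (hA : ∀ y, ∑ i ∈ S with f i = y, (W i)⁻¹ ≤ A) :
    ∑ y ∈ S.image f, ‖∑ i ∈ S with f i = y, b i‖ ^ 2 ≤ A * ∑ i ∈ S, W i * ‖b i‖ ^ 2 := by
  rw [← sum_fiberwise_of_maps_to fun i hi => mem_image_of_mem f hi, mul_sum]
  refine sum_le_sum fun y _ =>
    (sq_norm_sum_le_sum_inv_mul_sum _ b fun i hi => hW i (mem_filter.1 hi).1).trans ?_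
  exact mul_le_mul_of_nonneg_right (hA y)
    (sum_nonneg fun i hi => by have := hW i (mem_filter.1 hi).1; positivity)

theorem sum_sum_sq_norm_sum_fiberwise_le {ι κ κ' : Type*} [DecidableEq κ] [DecidableEq κ']
    (S : Finset ι) (f : ι → κ) (g : ι → κ') (b : ι → ℂ) {W : ι → ℝ} (hW : ∀ i ∈ S, 0 < W i)
    {A : ℝ} (hA : ∀ y z, ∑ i ∈ {i ∈ S | f i = y} with g i = z, (W i)⁻¹ ≤ A) :
    ∑ y ∈ S.image f, ∑ z ∈ {i ∈ S | f i = y}.image g,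
        ‖∑ i ∈ {i ∈ S | f i = y} with g i = z, b i‖ ^ 2 ≤
      A * ∑ i ∈ S, W i * ‖b i‖ ^ 2 := by
  calc _ ≤ ∑ y ∈ S.image f, A * ∑ i ∈ S with f i = y, W i * ‖b i‖ ^ 2 :=
        sum_le_sum fun y _ => sum_sq_norm_sum_fiberwise_le _ g b
          (fun i hi => hW i (mem_filter.1 hi).1) (hA y)
    _ = A * ∑ i ∈ S, W i * ‖b i‖ ^ 2 := by
        rw [← mul_sum, sum_fiberwise_of_maps_to fun i hi => mem_image_of_mem f hi]

theorem setIntegral_Ioc_exp_int_mul_I (k : ℤ) :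
    ∫ x in Set.Ioc 0 (2 * π), exp (k * x * I) = if k = 0 then (2 * π : ℂ) else 0 := by
  split_ifs with hk
  · simp [hk, Real.volume_real_Ioc_of_le (by positivity : (0 : ℝ) ≤ 2 * π)]
  · have hkI : (k : ℂ) * I ≠ 0 := mul_ne_zero (Int.cast_ne_zero.2 hk) I_ne_zero
    rw [← intervalIntegral.integral_of_le (by positivity)]
    simp_rw [mul_right_comm _ _ I]
    rw [integral_exp_mul_complex hkI]
    have : (k : ℂ) * I * ((2 * π : ℝ) : ℂ) = k * (2 * π * I) := by push_cast; ring
    rw [this, exp_int_mul_two_pi_mul_I]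
    simp

theorem integral_norm_sum_exp_sq (T : Finset ℤ) (β : ℤ → ℂ) :
    ∫ x in Set.Ioc 0 (2 * π), ‖∑ n ∈ T, β n * exp (n * x * I)‖ ^ 2 =
      2 * π * ∑ n ∈ T, ‖β n‖ ^ 2 := by
  have hexp : ∀ (n m : ℤ) (x : ℝ), exp (n * x * I) * conj (exp (m * x * I)) =
      exp ((n - m : ℤ) * x * I) := fun n m x => by
    rw [← exp_conj, ← exp_add]; congr 1; simp [conj_ofReal]; ring
  have hcont : ∀ n m : ℤ, Continuous fun x : ℝ => exp ((n - m : ℤ) * x * I) := by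
    intro n m; fun_prop
  apply ofReal_injective
  rw [← integral_complex_ofReal]
  push_cast
  simp_rw [← mul_conj', map_sum, sum_mul_sum, map_mul]
  calc ∫ x in Set.Ioc 0 (2 * π), ∑ n ∈ T, ∑ m ∈ T,
          β n * exp (n * x * I) * (conj (β m) * conj (exp (m * x * I)))
      = ∫ x in Set.Ioc 0 (2 * π), ∑ n ∈ T, ∑ m ∈ T,
          β n * conj (β m) * exp ((n - m : ℤ) * x * I) := by
        congr 1; ext x
        refine sum_congr rfl fun n _ => sum_congr rfl fun m _ => ?_
        rw [← hexp]; ring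
    _ = ∑ n ∈ T, ∑ m ∈ T, β n * conj (β m) * if n = m then (2 * π : ℂ) else 0 := by
        rw [integral_finsetSum _ fun n _ => integrable_finsetSum _ fun m _ =>
          ((hcont n m).const_mul _).integrableOn_Ioc]
        refine sum_congr rfl fun n _ => ?_
        rw [integral_finsetSum _ fun m _ => ((hcont n m).const_mul _).integrableOn_Ioc]
        refine sum_congr rfl fun m _ => ?_
        simp only [integral_const_mul, setIntegral_Ioc_exp_int_mul_I, sub_eq_zero]
    _ = 2 * π * ∑ n ∈ T, β n * conj (β n) := by
        simp_rw [mul_ite, mul_zero, sum_ite_eq, mul_sum]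
        refine sum_congr rfl fun n hn => ?_
        rw [if_pos hn]; ring

theorem integral_norm_sum_exp_sq_fiberwise {ι : Type*} (S : Finset ι) (ν : ι → ℤ) (b : ι → ℂ) :
    ∫ x in Set.Ioc 0 (2 * π), ‖∑ i ∈ S, b i * exp (ν i * x * I)‖ ^ 2 =
      2 * π * ∑ n ∈ S.image ν, ‖∑ i ∈ S with ν i = n, b i‖ ^ 2 := by
  classical
  rw [← integral_norm_sum_exp_sq]
  congr with x
  rw [← sum_fiberwise_of_maps_to fun i hi => mem_image_of_mem ν hi]
  congr 2
  refine sum_congr rfl fun n _ => ?_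
  rw [sum_mul]
  exact sum_congr rfl fun i hi => by rw [(mem_filter.1 hi).2]

theorem integral_integral_norm_sum_exp_sq {ι : Type*} (S : Finset ι) (P Q : ι → ℤ)
    (b : ι → ℂ) :
    ∫ t in Set.Ioc 0 (2 * π), ∫ x in Set.Ioc 0 (2 * π),
        ‖∑ i ∈ S, b i * exp (P i * t * I) * exp (Q i * x * I)‖ ^ 2 =
      (2 * π) ^ 2 * ∑ n ∈ S.image Q, ∑ m ∈ {i ∈ S | Q i = n}.image P,
        ‖∑ i ∈ {i ∈ S | Q i = n} with P i = m, b i‖ ^ 2 := by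
  classical
  have hcont : ∀ n, Continuous fun t : ℝ =>
      ‖∑ i ∈ S with Q i = n, b i * exp (P i * t * I)‖ ^ 2 := fun n => by fun_prop
  simp_rw [integral_norm_sum_exp_sq_fiberwise S Q]
  rw [integral_const_mul, integral_finsetSum _ fun n _ => (hcont n).integrableOn_Ioc]
  simp_rw [integral_norm_sum_exp_sq_fiberwise, mul_sum]
  exact sum_congr rfl fun _ _ => sum_congr rfl fun _ _ => by ring

theorem circleEvol_pow (c : ℤ →₀ ℂ) (d : ℕ) (t x : ℝ) :
    circleEvol c t x ^ d = ∑ a ∈ Fintype.piFinset fun _ : Fin d => c.support,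
      (∏ i, c (a i)) * exp ((∑ i, a i ^ 2 : ℤ) * t * I) * exp ((∑ i, a i : ℤ) * x * I) := by
  rw [← Fin.prod_const, circleEvol, prod_univ_sum]
  refine sum_congr rfl fun a _ => ?_
  push_cast
  simp only [sum_mul, exp_sum]
  rw [← prod_mul_distrib, ← prod_mul_distrib]
  refine prod_congr rfl fun i _ => ?_
  ring_nf

theorem continuous_circleEvol (c : ℤ →₀ ℂ) :
    Continuous fun p : ℝ × ℝ => circleEvol c p.1 p.2 := by
  unfold circleEvol; fun_prop

theorem setIntegral_norm_circleEvol_le (c : ℤ →₀ ℂ) (p : ℕ) :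
    ∫ t in Set.Ioc 0 1, ∫ x in Set.Icc 0 (2 * π), ‖circleEvol c t x‖ ^ p ≤
      ∫ t in Set.Ioc 0 (2 * π), ∫ x in Set.Ioc 0 (2 * π), ‖circleEvol c t x‖ ^ p := by
  simp_rw [integral_Icc_eq_integral_Ioc]
  have hcont : Continuous fun t => ∫ x in Set.Ioc 0 (2 * π), ‖circleEvol c t x‖ ^ p := by
    rw [← funext fun t => integral_Icc_eq_integral_Ioc]
    exact continuous_parametric_integral_of_continuous
      ((continuous_circleEvol c).norm.pow p) isCompact_Icc
  refine setIntegral_mono_set hcont.integrableOn_Ioc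
    (Filter.Eventually.of_forall fun t => integral_nonneg fun x => by positivity)
    (Set.Ioc_subset_Ioc_right (by linarith [Real.pi_gt_three])).eventuallyLE

theorem integral_norm_circleEvol_pow_six_le {s A : ℝ}
    (hfiber : ∀ (n m : ℤ) (S : Finset (Fin 3 → ℤ)), (∀ a ∈ S, ∑ i, a i = n ∧ ∑ i, a i ^ 2 = m) →
      ∑ a ∈ S, (∏ i, (1 + (a i : ℝ) ^ 2) ^ s)⁻¹ ≤ A) (c : ℤ →₀ ℂ) :
    ∫ t in Set.Ioc 0 1, ∫ x in Set.Icc 0 (2 * π), ‖circleEvol c t x‖ ^ 6 ≤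
      (2 * π) ^ 2 * A * (∑ k ∈ c.support, (1 + (k : ℝ) ^ 2) ^ s * ‖c k‖ ^ 2) ^ 3 := by
  classical
  set S := Fintype.piFinset fun _ : Fin 3 => c.support
  set W : (Fin 3 → ℤ) → ℝ := fun a => ∏ i, (1 + (a i : ℝ) ^ 2) ^ s
  have hmass : ∑ a ∈ S, W a * ‖∏ i, c (a i)‖ ^ 2 =
      (∑ k ∈ c.support, (1 + (k : ℝ) ^ 2) ^ s * ‖c k‖ ^ 2) ^ 3 := by
    rw [← Fin.prod_const, prod_univ_sum]
    refine sum_congr rfl fun a _ => ?_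
    simp only [W, norm_prod, ← prod_pow, ← prod_mul_distrib]
  calc _ ≤ ∫ t in Set.Ioc 0 (2 * π), ∫ x in Set.Ioc 0 (2 * π), ‖circleEvol c t x ^ 3‖ ^ 2 := by
        simpa only [norm_pow, ← pow_mul] using setIntegral_norm_circleEvol_le c 6
    _ ≤ (2 * π) ^ 2 * (A * ∑ a ∈ S, W a * ‖∏ i, c (a i)‖ ^ 2) := by
        simp_rw [circleEvol_pow, integral_integral_norm_sum_exp_sq]
        refine mul_le_mul_of_nonneg_left (sum_sum_sq_norm_sum_fiberwise_le _ _ _ _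
          (fun a _ => by positivity) fun n m => hfiber n m _ fun a ha => ?_) (by positivity)
        simp only [mem_filter] at ha
        exact ⟨ha.1.2, ha.2⟩
    _ = _ := by rw [hmass, mul_assoc]

/-- Strichartz estimate on the circle, `L⁶` version (Lemma 6.2, after Bourgain): for every
`s > 0` there is `C = C(s)` with
`‖u‖_{L⁶((0,1]×[0,2π])} ≤ C (∑ₖ (1+k²)^s |cₖ|²)^{1/2}`. -/
theorem strichartz_L6_circle (s : ℝ) (hs : 0 < s) :
    ∃ C : ℝ, 0 < C ∧ ∀ c : ℤ →₀ ℂ,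
      (∫ t in Set.Ioc (0 : ℝ) 1, ∫ x in Set.Icc (0 : ℝ) (2 * Real.pi),
          ‖circleEvol c t x‖ ^ (6 : ℕ)) ^ ((1 : ℝ) / 6)
        ≤ C * (∑ k ∈ c.support, (1 + (k : ℝ) ^ 2) ^ s * ‖c k‖ ^ 2) ^ ((1 : ℝ) / 2) := by
  obtain ⟨A, hA, hfiber⟩ := exists_sum_inv_prod_rpow_le s hs
  refine ⟨((2 * π) ^ 2 * A) ^ ((1 : ℝ) / 6), by positivity, fun c => ?_⟩
  set X := ∑ k ∈ c.support, (1 + (k : ℝ) ^ 2) ^ s * ‖c k‖ ^ 2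
  have hX : 0 ≤ X := sum_nonneg fun k _ => by positivity
  calc _ ≤ ((2 * π) ^ 2 * A * X ^ 3) ^ ((1 : ℝ) / 6) :=
        Real.rpow_le_rpow (setIntegral_nonneg measurableSet_Ioc fun t _ =>
          integral_nonneg fun x => by positivity)
          (integral_norm_circleEvol_pow_six_le hfiber c) (by norm_num)
    _ = ((2 * π) ^ 2 * A) ^ ((1 : ℝ) / 6) * X ^ ((1 : ℝ) / 2) := by
        rw [Real.mul_rpow (by positivity) (by positivity), ← Real.rpow_natCast X 3,
          ← Real.rpow_mul hX]
        norm_num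
end
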